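/- arXiv:math/0604185 — 4 statements merged into one kernel-verified Lean document; each statement's English description precedes it below -/
import Mathlib

section
/- Let ω be a modulus of continuity with ω(2ξ) ≤ (3/2) ω(ξ) for a given ξ > 0. Then (1/π) ∫_{ξ/2}^∞ (ω(2η+ξ) − ω(2η−ξ) − 2ω(ξ))/η² dη ≤ −(1/π) · ω(ξ)/ξ. -/
/-!
Concavity and `ω 0 = 0` give `ω (2η + ξ) - ω (2η - ξ) ≤ ω (2ξ)` for `η ≥ ξ / 2`, so by the doubling
bound the integrand is at most `-(ω ξ / 2) / η ^ 2`, whose integral over `(ξ / 2, ∞)` is `-ω ξ / ξ`.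
-/

open MeasureTheory Set Real

section Concave

variable {𝕜 : Type*} [Field 𝕜] [LinearOrder 𝕜] [IsStrictOrderedRing 𝕜] {f : 𝕜 → 𝕜}

theorem ConcaveOn.map_add_add_map_zero_le (hf : ConcaveOn 𝕜 (Ici 0) f) {x y : 𝕜}
    (hx : 0 ≤ x) (hy : 0 ≤ y) : f (x + y) + f 0 ≤ f x + f y := by
  rcases hx.eq_or_lt with rfl | hx
  · simp [add_comm]
  rcases hy.eq_or_lt with rfl | hy
  · simp
  have hxy : 0 < x + y := add_pos hx hy
  have hx' := hf.neg.secant_mono_aux1 self_mem_Ici (mem_Ici.2 hxy.le) hx (lt_add_of_pos_right x hy)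
  have hy' := hf.neg.secant_mono_aux1 self_mem_Ici (mem_Ici.2 hxy.le) hy (lt_add_of_pos_left y hx)
  simp only [Pi.neg_apply] at hx' hy'
  refine le_of_mul_le_mul_left ?_ hxy
  linear_combination hx' + hy'

theorem ConcaveOn.map_add_sub_map_sub_le (hf : ConcaveOn 𝕜 (Ici 0) f) {a h : 𝕜}
    (hh : 0 ≤ h) (hha : h ≤ a) : f (a + h) - f (a - h) ≤ f (2 * h) - f 0 := by
  have := hf.map_add_add_map_zero_le (sub_nonneg.2 hha) (mul_nonneg zero_le_two hh)
  rw [show a - h + 2 * h = a + h by ring] at this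
  linarith

end Concave

theorem div_sq_eq_mul_rpow_neg_two (c : ℝ) {η : ℝ} (hη : 0 ≤ η) :
    c / η ^ 2 = c * η ^ (-2 : ℝ) := by
  rw [rpow_neg hη, rpow_two, div_eq_mul_inv]

theorem integrableOn_Ioi_div_sq (c : ℝ) {a : ℝ} (ha : 0 < a) :
    IntegrableOn (fun η : ℝ => c / η ^ 2) (Ioi a) :=
  IntegrableOn.congr_fun
    ((integrableOn_Ioi_rpow_of_lt (by norm_num : (-2 : ℝ) < -1) ha).const_mul c)
    (fun η hη => (div_sq_eq_mul_rpow_neg_two c (ha.trans hη).le).symm) measurableSet_Ioi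

theorem integral_Ioi_div_sq (c : ℝ) {a : ℝ} (ha : 0 < a) :
    ∫ η in Ioi a, c / η ^ 2 = c / a := by
  rw [setIntegral_congr_fun measurableSet_Ioi
      (fun η hη => div_sq_eq_mul_rpow_neg_two c (ha.trans hη).le),
    integral_const_mul, integral_Ioi_rpow_of_lt (by norm_num : (-2 : ℝ) < -1) ha]
  norm_num [rpow_neg_one, div_eq_mul_inv]

theorem dissipation_tail_estimate_general
    (ω : ℝ → ℝ)
    (hconc : ConcaveOn ℝ (Ici 0) ω)
    (h0 : ω 0 = 0)
    (ξ : ℝ) (hξ : 0 < ξ)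
    (hdbl : ω (2 * ξ) ≤ (3 / 2) * ω ξ)
    (hint : IntegrableOn
      (fun η => (ω (2 * η + ξ) - ω (2 * η - ξ) - 2 * ω ξ) / η ^ 2) (Ioi (ξ / 2))) :
    (1 / π) * ∫ η in Ioi (ξ / 2),
        (ω (2 * η + ξ) - ω (2 * η - ξ) - 2 * ω ξ) / η ^ 2
      ≤ -(1 / π) * (ω ξ / ξ) := by
  have hξ2 : 0 < ξ / 2 := half_pos hξ
  have hbound : ∀ η ∈ Ioi (ξ / 2),
      (ω (2 * η + ξ) - ω (2 * η - ξ) - 2 * ω ξ) / η ^ 2 ≤ -(ω ξ / 2) / η ^ 2 := by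
    intro η hη
    have hincr := hconc.map_add_sub_map_sub_le hξ.le (by linarith [mem_Ioi.1 hη] : ξ ≤ 2 * η)
    gcongr
    linarith
  calc (1 / π) * ∫ η in Ioi (ξ / 2), (ω (2 * η + ξ) - ω (2 * η - ξ) - 2 * ω ξ) / η ^ 2
      ≤ (1 / π) * ∫ η in Ioi (ξ / 2), -(ω ξ / 2) / η ^ 2 := by
        refine mul_le_mul_of_nonneg_left ?_ (by positivity)
        exact setIntegral_mono_on hint (integrableOn_Ioi_div_sq _ hξ2) measurableSet_Ioi hbound
    _ = -(1 / π) * (ω ξ / ξ) := by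
        rw [integral_Ioi_div_sq _ hξ2]
        ring

theorem dissipation_tail_estimate
    (ω : ℝ → ℝ)
    (hconc : ConcaveOn ℝ (Ici 0) ω)
    (hmono : MonotoneOn ω (Ici 0))
    (hcont : ContinuousOn ω (Ici 0))
    (h0 : ω 0 = 0)
    (ξ : ℝ) (hξ : 0 < ξ) (hpos : 0 < ω ξ)
    (hdbl : ω (2 * ξ) ≤ (3 / 2) * ω ξ)
    (hint : IntegrableOn
      (fun η => (ω (2 * η + ξ) - ω (2 * η - ξ) - 2 * ω ξ) / η ^ 2) (Ioi (ξ / 2))) :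
    (1 / π) * ∫ η in Ioi (ξ / 2),
        (ω (2 * η + ξ) - ω (2 * η - ξ) - 2 * ω ξ) / η ^ 2
      ≤ -(1 / π) * (ω ξ / ξ) :=
  dissipation_tail_estimate_general ω hconc h0 ξ hξ hdbl hint
end

section
/- Define ω : [0,∞) → ℝ by ω(ξ) = ξ − ξ^{3/2} for 0 ≤ ξ ≤ δ, and for ξ > δ by ω(ξ) = ω(δ) + ∫_δ^ξ γ/(η(4 + log(η/δ))) dη, where 0 < γ < δ. Then for δ sufficiently small, ω is concave and strictly increasing on [0,∞). -/
/-!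
On `[0, ∞)`, `knv δ γ` is the primitive of its a.e. derivative, which is `1 - (3/2)√η` on
`[0, δ]` and `γ / (η (4 + log (η/δ)))` beyond `δ`. For `δ < 1/4` this derivative is positive and
nonincreasing: it exceeds `1/4` on `[0, δ]` and stays below `γ / (4δ) < 1/4` beyond `δ`, so its
jump at `δ` is downwards. The primitive of a positive antitone function is strictly increasing
and concave.
-/

open MeasureTheory Set Real

/-- The Kiselev–Nazarov–Volberg modulus of continuity. -/
noncomputable def knv (δ γ : ℝ) (ξ : ℝ) : ℝ :=
  if ξ ≤ δ then ξ - ξ ^ ((3:ℝ)/2)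
  else (δ - δ ^ ((3:ℝ)/2)) + ∫ η in Ioc δ ξ, γ / (η * (4 + Real.log (η / δ)))

namespace AntitoneOn

variable {g : ℝ → ℝ} {x y : ℝ}

theorem mul_le_integral (hg : AntitoneOn g (Icc x y)) (hxy : x ≤ y) :
    (y - x) * g y ≤ ∫ t in x..y, g t := by
  have hint : IntervalIntegrable g volume x y :=
    (hg.mono (uIcc_of_le hxy).subset).intervalIntegrable
  calc (y - x) * g y = ∫ _ in x..y, g y := by rw [intervalIntegral.integral_const, smul_eq_mul]
    _ ≤ ∫ t in x..y, g t :=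
      intervalIntegral.integral_mono_on hxy intervalIntegrable_const hint
        fun t ht => hg ht (right_mem_Icc.2 hxy) ht.2

theorem integral_le_mul (hg : AntitoneOn g (Icc x y)) (hxy : x ≤ y) :
    ∫ t in x..y, g t ≤ (y - x) * g x := by
  have hint : IntervalIntegrable g volume x y :=
    (hg.mono (uIcc_of_le hxy).subset).intervalIntegrable
  calc ∫ t in x..y, g t ≤ ∫ _ in x..y, g x :=
      intervalIntegral.integral_mono_on hxy hint intervalIntegrable_const
        fun t ht => hg (left_mem_Icc.2 hxy) ht ht.1
    _ = (y - x) * g x := by rw [intervalIntegral.integral_const, smul_eq_mul]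

variable {a : ℝ}

theorem intervalIntegrable_of_Ici (hg : AntitoneOn g (Ici a)) (hx : a ≤ x) (hy : a ≤ y) :
    IntervalIntegrable g volume x y :=
  (hg.mono (Icc_subset_Ici_self.trans (Ici_subset_Ici.2 (le_min hx hy)))).intervalIntegrable

theorem integral_sub_integral_of_Ici (hg : AntitoneOn g (Ici a)) (hx : a ≤ x) (hy : a ≤ y) :
    (∫ t in a..y, g t) - ∫ t in a..x, g t = ∫ t in x..y, g t :=
  intervalIntegral.integral_interval_sub_left (hg.intervalIntegrable_of_Ici le_rfl hy)
    (hg.intervalIntegrable_of_Ici le_rfl hx)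

theorem mono_Icc_of_Ici (hg : AntitoneOn g (Ici a)) (hx : a ≤ x) : AntitoneOn g (Icc x y) :=
  hg.mono (Icc_subset_Ici_self.trans (Ici_subset_Ici.2 hx))

theorem concaveOn_integral (hg : AntitoneOn g (Ici a)) :
    ConcaveOn ℝ (Ici a) (fun x => ∫ t in a..x, g t) := by
  refine concaveOn_of_slope_anti_adjacent (convex_Ici a) fun {x y z} hx _ hxy hyz => ?_
  have hy : a ≤ y := le_trans hx hxy.le
  simp only [hg.integral_sub_integral_of_Ici hy (hy.trans hyz.le),
    hg.integral_sub_integral_of_Ici hx hy]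
  calc (∫ t in y..z, g t) / (z - y) ≤ g y := by
        rw [div_le_iff₀ (sub_pos.2 hyz), mul_comm]
        exact (hg.mono_Icc_of_Ici hy).integral_le_mul hyz.le
    _ ≤ (∫ t in x..y, g t) / (y - x) := by
        rw [le_div_iff₀ (sub_pos.2 hxy), mul_comm]
        exact (hg.mono_Icc_of_Ici hx).mul_le_integral hxy.le

theorem strictMonoOn_integral (hg : AntitoneOn g (Ici a)) (hpos : ∀ x ∈ Ici a, 0 < g x) :
    StrictMonoOn (fun x => ∫ t in a..x, g t) (Ici a) := by
  intro x hx y hy hxy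
  rw [← sub_pos, hg.integral_sub_integral_of_Ici hx hy]
  exact (mul_pos (sub_pos.2 hxy) (hpos y hy)).trans_le
    ((hg.mono_Icc_of_Ici hx).mul_le_integral hxy.le)

end AntitoneOn

noncomputable def knvDeriv (δ γ : ℝ) (η : ℝ) : ℝ :=
  if η ≤ δ then 1 - 3 / 2 * √η else γ / (η * (4 + log (η / δ)))

section knvDeriv

variable {δ γ : ℝ}

theorem quarter_lt_one_sub_sqrt {η : ℝ} (h : η < 1 / 4) : 1 / 4 < 1 - 3 / 2 * √η := by
  have : √η < 1 / 2 := (sqrt_lt' (by norm_num)).2 (by linarith)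
  linarith

theorem four_mul_lt_mul_four_add_log (hδ : 0 < δ) {η : ℝ} (h : δ < η) :
    4 * δ < η * (4 + log (η / δ)) := by
  have : 0 < log (η / δ) := log_pos ((one_lt_div hδ).2 h)
  nlinarith

theorem mul_four_add_log_le (hδ : 0 < δ) {a b : ℝ} (ha : δ < a) (hab : a ≤ b) :
    a * (4 + log (a / δ)) ≤ b * (4 + log (b / δ)) := by
  have hla : 0 < log (a / δ) := log_pos ((one_lt_div hδ).2 ha)
  have hlab : log (a / δ) ≤ log (b / δ) :=
    log_le_log (div_pos (hδ.trans ha) hδ) (div_le_div_of_nonneg_right hab hδ.le)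
  nlinarith

theorem knvDeriv_pos (hδ : 0 < δ) (hδ4 : δ < 1 / 4) (hγ : 0 < γ) {η : ℝ} :
    0 < knvDeriv δ γ η := by
  unfold knvDeriv
  split_ifs with h
  · linarith [quarter_lt_one_sub_sqrt (h.trans_lt hδ4)]
  · exact div_pos hγ (by linarith [four_mul_lt_mul_four_add_log hδ (not_le.1 h)])

theorem knvDeriv_antitoneOn (hδ : 0 < δ) (hδ4 : δ < 1 / 4) (hγ : 0 ≤ γ) (hγδ : γ < δ) :
    AntitoneOn (knvDeriv δ γ) (Ici 0) := by
  intro a ha b _ hab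
  unfold knvDeriv
  split_ifs with hb ha' ha'
  · gcongr
  · exact absurd (hab.trans hb) ha'
  · have hden := four_mul_lt_mul_four_add_log hδ (not_le.1 hb)
    have hlt : γ / (b * (4 + log (b / δ))) < 1 / 4 := by
      rw [div_lt_iff₀ (by linarith)]; linarith
    linarith [quarter_lt_one_sub_sqrt (ha'.trans_lt hδ4)]
  · have hden := four_mul_lt_mul_four_add_log hδ (not_le.1 ha')
    exact div_le_div_of_nonneg_left hγ (by linarith) (mul_four_add_log_le hδ (not_le.1 ha') hab)

end knvDeriv

theorem integral_one_sub_sqrt (ξ : ℝ) :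
    ∫ t in (0:ℝ)..ξ, (1 - 3 / 2 * √t) = ξ - ξ ^ ((3:ℝ)/2) := by
  have hderiv : ∀ t ∈ uIcc 0 ξ,
      HasDerivAt (fun t : ℝ => t - t ^ ((3:ℝ)/2)) (1 - 3 / 2 * √t) t := by
    intro t _
    have h := hasDerivAt_rpow_const (x := t) (p := (3:ℝ)/2) (Or.inr (by norm_num))
    rw [show (3:ℝ)/2 - 1 = 1/2 by norm_num, ← sqrt_eq_rpow] at h
    exact (hasDerivAt_id' t).sub h
  rw [intervalIntegral.integral_eq_sub_of_hasDerivAt hderiv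
    (Continuous.intervalIntegrable (by fun_prop) _ _)]
  simp [zero_rpow (by norm_num : (3:ℝ)/2 ≠ 0)]

theorem knv_eq_integral_knvDeriv {δ γ ξ : ℝ} (hδ : 0 < δ) (hδ4 : δ < 1 / 4) (hγ : 0 < γ)
    (hγδ : γ < δ) (hξ : 0 ≤ ξ) : knv δ γ ξ = ∫ t in (0:ℝ)..ξ, knvDeriv δ γ t := by
  have hbranch : ∀ {x}, 0 ≤ x → x ≤ δ →
      ∫ t in (0:ℝ)..x, knvDeriv δ γ t = x - x ^ ((3:ℝ)/2) :=
    fun {x} hx hxδ => by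
      rw [← integral_one_sub_sqrt x]
      refine intervalIntegral.integral_congr fun t ht => if_pos ?_
      exact ((uIcc_of_le hx ▸ ht).2).trans hxδ
  by_cases hξδ : ξ ≤ δ
  · rw [knv, if_pos hξδ, hbranch hξ hξδ]
  have hanti := knvDeriv_antitoneOn hδ hδ4 hγ.le hγδ
  rw [knv, if_neg hξδ, ← intervalIntegral.integral_add_adjacent_intervals
    (hanti.intervalIntegrable_of_Ici le_rfl hδ.le) (hanti.intervalIntegrable_of_Ici hδ.le hξ),
    hbranch hδ.le le_rfl, intervalIntegral.integral_of_le (not_le.1 hξδ).le]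
  congr 1
  exact setIntegral_congr_fun measurableSet_Ioc fun t ht => (if_neg (not_le.2 ht.1)).symm

theorem knv_concave_strictMono :
    ∃ δ₀ > 0, ∀ δ γ : ℝ, 0 < δ → δ < δ₀ → 0 < γ → γ < δ →
      ConcaveOn ℝ (Ici 0) (knv δ γ) ∧ StrictMonoOn (knv δ γ) (Ici 0) := by
  refine ⟨1 / 4, by norm_num, fun δ γ hδ hδ4 hγ hγδ => ?_⟩
  have hanti := knvDeriv_antitoneOn hδ hδ4 hγ.le hγδ
  have heq : EqOn (fun x => ∫ t in (0:ℝ)..x, knvDeriv δ γ t) (knv δ γ) (Ici 0) :=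
    fun _ hx => (knv_eq_integral_knvDeriv hδ hδ4 hγ hγδ hx).symm
  exact ⟨hanti.concaveOn_integral.congr heq,
    (hanti.strictMonoOn_integral fun _ _ => knvDeriv_pos hδ hδ4 hγ).congr heq⟩
end

section
/- Let ω be a modulus of continuity with ω'(0+) finite and lim_{ξ→0+} ω''(ξ) = −∞ (in the sense that (ω(ξ) − ω'(0)ξ)/ξ² → −∞ as ξ → 0+). If f : ℝⁿ → ℝ is a C² periodic function satisfying |f(x) − f(y)| ≤ ω(|x − y|) for all x, y, then ‖∇f‖_∞ < ω'(0+). -/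
/-!
Fix `x` with `g := ∇f(x) ≠ 0` and move from `x` in the direction `v = g / ‖g‖`. Since `f` is `C²`,
`f(x + t v) - f(x) ≥ t ‖g‖ - C t²` for small `t > 0`, while the modulus gives
`f(x + t v) - f(x) ≤ ω(t) = D t - ρ(t) t²`. Dividing by `t`, `‖g‖ ≤ D - (ρ(t) - C) t`, and
`ρ(t) → ∞` makes the right-hand side strictly smaller than `D`. When `g = 0` the same comparison,
with `0 ≤ ω(t)`, gives `0 < D`.
-/

open Set Filter Topology Asymptotics

theorem ContDiffAt.isBigO_sub_sub_fderiv {E F : Type*} [NormedAddCommGroup E] [NormedSpace ℝ E]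
    [NormedAddCommGroup F] [NormedSpace ℝ F] {f : E → F} {a : E} (hf : ContDiffAt ℝ 2 f a) :
    (fun y => f y - f a - fderiv ℝ f a (y - a)) =O[𝓝 a] fun y => ‖y - a‖ ^ 2 := by
  obtain ⟨K, s, hs, hK⟩ := (hf.fderiv_right (m := 1) (by norm_num)).exists_lipschitzOnWith
  have hdiff : ∀ᶠ y in 𝓝 a, DifferentiableAt ℝ f y :=
    (hf.eventually (by simp)).mono fun y hy => hy.differentiableAt (by norm_num)
  obtain ⟨r, hr, hball⟩ := Metric.mem_nhds_iff.1 (inter_mem hs hdiff)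
  refine .of_bound K (mem_of_superset (Metric.ball_mem_nhds a hr) fun y hy => ?_)
  have hsub : Metric.closedBall a ‖y - a‖ ⊆ s ∩ {y | DifferentiableAt ℝ f y} :=
    (Metric.closedBall_subset_ball (mem_ball_iff_norm.1 hy)).trans hball
  have hderiv : ∀ z ∈ Metric.closedBall a ‖y - a‖,
      HasFDerivWithinAt (fun z => f z - fderiv ℝ f a z) (fderiv ℝ f z - fderiv ℝ f a)
        (Metric.closedBall a ‖y - a‖) z := fun z hz =>
    ((hsub hz).2.hasFDerivAt.sub (fderiv ℝ f a).hasFDerivAt).hasFDerivWithinAt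
  have hbound : ∀ z ∈ Metric.closedBall a ‖y - a‖,
      ‖fderiv ℝ f z - fderiv ℝ f a‖ ≤ K * ‖y - a‖ := fun z hz => calc
    _ ≤ K * ‖z - a‖ := by
      rw [← dist_eq_norm, ← dist_eq_norm]
      exact hK.dist_le_mul z (hsub hz).1 a (mem_of_mem_nhds hs)
    _ ≤ K * ‖y - a‖ := by gcongr; exact mem_closedBall_iff_norm.1 hz
  have hmvt := (convex_closedBall a ‖y - a‖).norm_image_sub_le_of_norm_hasFDerivWithin_le hderiv
    hbound (Metric.mem_closedBall_self (norm_nonneg _)) (mem_closedBall_iff_norm.2 le_rfl)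
  have hrem : f y - f a - fderiv ℝ f a (y - a) =
      (f y - fderiv ℝ f a y) - (f a - fderiv ℝ f a a) := by
    rw [map_sub]; abel
  simpa only [Set.mem_ofPred_eq, hrem, norm_mul, norm_norm, sq, mul_assoc] using hmvt

theorem ContDiffAt.exists_eventually_mul_sub_sq_le {E : Type*} [NormedAddCommGroup E]
    [NormedSpace ℝ E] {f : E → ℝ} {ω : ℝ → ℝ} {x v : E} (hf : ContDiffAt ℝ 2 f x)
    (hv : ‖v‖ = 1) (hmod : ∀ y, f y - f x ≤ ω ‖y - x‖) :
    ∃ C, ∀ᶠ t in 𝓝[>] 0, fderiv ℝ f x v * t - C * t ^ 2 ≤ ω t := by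
  obtain ⟨C, hC⟩ := hf.isBigO_sub_sub_fderiv.bound
  have hline : Tendsto (fun t : ℝ => x + t • v) (𝓝[>] 0) (𝓝 x) :=
    ((Continuous.tendsto' (by fun_prop) 0 x (by simp))).mono_left nhdsWithin_le_nhds
  refine ⟨C, ((hline.eventually hC).and self_mem_nhdsWithin).mono fun t ⟨ht, ht0⟩ => ?_⟩
  have hnorm : ‖x + t • v - x‖ = t := by
    rw [add_sub_cancel_left, norm_smul, hv, mul_one, Real.norm_of_nonneg (le_of_lt ht0)]
  have hbound := hmod (x + t • v)
  rw [hnorm] at ht hbound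
  rw [add_sub_cancel_left, map_smul, smul_eq_mul, norm_pow, Real.norm_of_nonneg (le_of_lt ht0),
    Real.norm_eq_abs] at ht
  linarith [neg_le_of_abs_le ht]

theorem lt_of_eventually_mul_sub_sq_le {ρ : ℝ → ℝ} {a C D : ℝ}
    (hρ : Tendsto ρ (𝓝[>] 0) atTop)
    (h : ∀ᶠ t in 𝓝[>] 0, a * t - C * t ^ 2 ≤ D * t - ρ t * t ^ 2) : a < D := by
  obtain ⟨t, ⟨hρt, ht⟩, ht0⟩ :=
    ((hρ.eventually (eventually_gt_atTop C)).and h |>.and self_mem_nhdsWithin).exists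
  have ht0 : 0 < t := ht0
  nlinarith [mul_pos (mul_pos (sub_pos.2 hρt) ht0) ht0]

theorem fderiv_apply_inv_norm_smul_gradient {F : Type*} [NormedAddCommGroup F]
    [InnerProductSpace ℝ F] [CompleteSpace F] (f : F → ℝ) (x : F) :
    fderiv ℝ f x (‖gradient f x‖⁻¹ • gradient f x) = ‖gradient f x‖ := by
  rw [← toDual_gradient, InnerProductSpace.toDual_apply_apply, real_inner_smul_right,
    real_inner_self_eq_norm_sq]
  rcases eq_or_ne ‖gradient f x‖ 0 with h | h
  · simp [h]
  · field_simp

theorem gradient_strict_bound_of_modulus_general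
    (n : ℕ) (f : EuclideanSpace ℝ (Fin n) → ℝ)
    (hf : ContDiff ℝ 2 f)
    (ω ρ : ℝ → ℝ)
    (hmono : MonotoneOn ω (Ici 0))
    (h0 : ω 0 = 0)
    (D : ℝ)
    (hρ : ∀ ξ > (0:ℝ), ω ξ = D * ξ - ρ ξ * ξ ^ 2)
    (hρtop : Tendsto ρ (nhdsWithin 0 (Ioi 0)) atTop)
    (hmod : ∀ x y, |f x - f y| ≤ ω ‖x - y‖) :
    ∀ x, ‖gradient f x‖ < D := by
  have lt_of_le_modulus : ∀ a C, (∀ᶠ t in 𝓝[>] 0, a * t - C * t ^ 2 ≤ ω t) → a < D :=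
    fun a C h => lt_of_eventually_mul_sub_sq_le hρtop <|
      h.mp (eventually_mem_nhdsWithin.mono fun t ht h => hρ t ht ▸ h)
  intro x
  rcases eq_or_ne (gradient f x) 0 with hg | hg
  · rw [hg, norm_zero]
    refine lt_of_le_modulus 0 0 (eventually_mem_nhdsWithin.mono fun t (ht : 0 < t) => ?_)
    simpa [h0] using hmono self_mem_Ici ht.le ht.le
  · obtain ⟨C, hC⟩ := hf.contDiffAt.exists_eventually_mul_sub_sq_le
      (v := ‖gradient f x‖⁻¹ • gradient f x) (by simpa using norm_smul_inv_norm (𝕜 := ℝ) hg)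
      fun y => (le_abs_self _).trans (hmod y x)
    rw [fderiv_apply_inv_norm_smul_gradient] at hC
    exact lt_of_le_modulus _ C hC

theorem gradient_strict_bound_of_modulus
    (n : ℕ) (f : EuclideanSpace ℝ (Fin n) → ℝ)
    (hf : ContDiff ℝ 2 f)
    (b : Module.Basis (Fin n) ℝ (EuclideanSpace ℝ (Fin n)))
    (hper : ∀ i : Fin n, ∀ x, f (x + b i) = f x)
    (ω ρ : ℝ → ℝ)
    (hconc : ConcaveOn ℝ (Ici 0) ω)
    (hmono : MonotoneOn ω (Ici 0))
    (hcont : ContinuousOn ω (Ici 0))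
    (h0 : ω 0 = 0)
    (D : ℝ) (hD : 0 ≤ D)
    (hρ : ∀ ξ > (0:ℝ), ω ξ = D * ξ - ρ ξ * ξ ^ 2)
    (hρtop : Tendsto ρ (nhdsWithin 0 (Ioi 0)) atTop)
    (hmod : ∀ x y, |f x - f y| ≤ ω ‖x - y‖) :
    ∀ x, ‖gradient f x‖ < D :=
  gradient_strict_bound_of_modulus_general n f hf ω ρ hmono h0 D hρ hρtop hmod
end

section
/- Let ω and Ω be moduli of continuity and θ : ℝ² → ℝ be C¹ with modulus of continuity ω, and let u : ℝ² → ℝ² have modulus of continuity Ω. Suppose θ(x) − θ(y) = ω(ξ) with ξ = |x−y| > 0 and ω is differentiable at ξ. Then (u·∇θ)(x) − (u·∇θ)(y) ≤ Ω(ξ) ω'(ξ). -/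
/-!
For `t ≥ 0` the points `x + t • u x` and `y + t • u y` are at distance at most `ξ + t Ω(ξ)`, so
`f t = θ (x + t • u x) - θ (y + t • u y)` stays below `g t = ω (ξ + t Ω(ξ))`, with equality at
`t = 0` because `θ` touches its modulus there. Comparing right derivatives at `0` gives
`f'(0) ≤ g'(0)`, and `f'(0)`, `g'(0)` are the two sides of the estimate.
-/

open Set Filter Topology

theorem HasDerivAt.le_of_eventually_le_right {f g : ℝ → ℝ} {f' g' a : ℝ}
    (hf : HasDerivAt f f' a) (hg : HasDerivAt g g' a) (ha : f a = g a)
    (hle : ∀ᶠ t in 𝓝[>] a, f t ≤ g t) : f' ≤ g' := by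
  have hslope : Tendsto (slope (g - f) a) (𝓝[>] a) (𝓝 (g' - f')) :=
    (hasDerivAt_iff_tendsto_slope.mp (hg.sub hf)).mono_left (nhdsGT_le_nhdsNE a)
  have hnonneg : ∀ᶠ t in 𝓝[>] a, 0 ≤ slope (g - f) a t := by
    filter_upwards [hle, self_mem_nhdsWithin] with t ht hat
    rw [slope_def_field, Pi.sub_apply, Pi.sub_apply, ha, sub_self, sub_zero]
    exact div_nonneg (sub_nonneg.mpr ht) (sub_nonneg.mpr (le_of_lt hat))
  exact sub_nonneg.mp (ge_of_tendsto hslope hnonneg)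

section Flow

variable {E : Type*} [NormedAddCommGroup E] [NormedSpace ℝ E]

theorem norm_add_smul_sub_add_smul_le (x y a b : E) {t : ℝ} (ht : 0 ≤ t) :
    ‖(x + t • a) - (y + t • b)‖ ≤ ‖x - y‖ + t * ‖a - b‖ := by
  calc ‖(x + t • a) - (y + t • b)‖ = ‖(x - y) + t • (a - b)‖ := by
        rw [smul_sub]; congr 1; abel
    _ ≤ ‖x - y‖ + ‖t • (a - b)‖ := norm_add_le _ _
    _ = ‖x - y‖ + t * ‖a - b‖ := by rw [norm_smul, Real.norm_of_nonneg ht]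

theorem sub_le_modulus_of_flow {θ : E → ℝ} {u : E → E} {ω Ω : ℝ → ℝ}
    (hωmono : MonotoneOn ω (Ici 0))
    (hmodθ : ∀ p q, |θ p - θ q| ≤ ω ‖p - q‖) (hmodu : ∀ p q, ‖u p - u q‖ ≤ Ω ‖p - q‖)
    (x y : E) {t : ℝ} (ht : 0 ≤ t) :
    θ (x + t • u x) - θ (y + t • u y) ≤ ω (‖x - y‖ + t • Ω ‖x - y‖) := by
  have hdist : ‖(x + t • u x) - (y + t • u y)‖ ≤ ‖x - y‖ + t • Ω ‖x - y‖ :=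
    (norm_add_smul_sub_add_smul_le x y (u x) (u y) ht).trans <| by
      rw [smul_eq_mul]; gcongr; exact hmodu x y
  calc θ (x + t • u x) - θ (y + t • u y) ≤ ω ‖(x + t • u x) - (y + t • u y)‖ :=
        (le_abs_self _).trans (hmodθ _ _)
    _ ≤ ω (‖x - y‖ + t • Ω ‖x - y‖) :=
        hωmono (norm_nonneg _) ((norm_nonneg _).trans hdist) hdist

end Flow

theorem flow_term_estimate_general
    (θ : EuclideanSpace ℝ (Fin 2) → ℝ) (hθ : ContDiff ℝ 1 θ)
    (u : EuclideanSpace ℝ (Fin 2) → EuclideanSpace ℝ (Fin 2))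
    (ω Ω : ℝ → ℝ)
    (hωmono : MonotoneOn ω (Ici 0))
    (hmodθ : ∀ p q, |θ p - θ q| ≤ ω ‖p - q‖)
    (hmodu : ∀ p q, ‖u p - u q‖ ≤ Ω ‖p - q‖)
    (x y : EuclideanSpace ℝ (Fin 2)) (ξ : ℝ) (hξdef : ξ = ‖x - y‖)
    (htouch : θ x - θ y = ω ξ)
    (d : ℝ) (hd : HasDerivAt ω d ξ) :
    fderiv ℝ θ x (u x) - fderiv ℝ θ y (u y) ≤ Ω ξ * d := by
  subst hξdef
  have hθdiff := hθ.differentiable one_ne_zero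
  have hflow : HasDerivAt (fun t : ℝ => θ (x + t • u x) - θ (y + t • u y))
      (fderiv ℝ θ x (u x) - fderiv ℝ θ y (u y)) 0 :=
    ((hθdiff x).hasFDerivAt.hasLineDerivAt (u x)).sub
      ((hθdiff y).hasFDerivAt.hasLineDerivAt (u y))
  have hmodulus : HasDerivAt (fun t : ℝ => ω (‖x - y‖ + t • Ω ‖x - y‖)) (Ω ‖x - y‖ * d) 0 := by
    simpa [HasLineDerivAt] using hd.hasFDerivAt.hasLineDerivAt (Ω ‖x - y‖)
  refine hflow.le_of_eventually_le_right hmodulus (by simpa using htouch) ?_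
  filter_upwards [self_mem_nhdsWithin] with t ht
  exact sub_le_modulus_of_flow hωmono hmodθ hmodu x y (le_of_lt ht)

theorem flow_term_estimate
    (θ : EuclideanSpace ℝ (Fin 2) → ℝ) (hθ : ContDiff ℝ 1 θ)
    (u : EuclideanSpace ℝ (Fin 2) → EuclideanSpace ℝ (Fin 2))
    (ω Ω : ℝ → ℝ)
    (hωconc : ConcaveOn ℝ (Ici 0) ω) (hωmono : MonotoneOn ω (Ici 0))
    (hωcont : ContinuousOn ω (Ici 0)) (hω0 : ω 0 = 0)
    (hΩconc : ConcaveOn ℝ (Ici 0) Ω) (hΩmono : MonotoneOn Ω (Ici 0))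
    (hΩcont : ContinuousOn Ω (Ici 0)) (hΩ0 : Ω 0 = 0)
    (hmodθ : ∀ p q, |θ p - θ q| ≤ ω ‖p - q‖)
    (hmodu : ∀ p q, ‖u p - u q‖ ≤ Ω ‖p - q‖)
    (x y : EuclideanSpace ℝ (Fin 2)) (ξ : ℝ) (hξdef : ξ = ‖x - y‖) (hξ : 0 < ξ)
    (htouch : θ x - θ y = ω ξ)
    (d : ℝ) (hd : HasDerivAt ω d ξ) :
    fderiv ℝ θ x (u x) - fderiv ℝ θ y (u y) ≤ Ω ξ * d :=
  flow_term_estimate_general θ hθ u ω Ω hωmono hmodθ hmodu x y ξ hξdef htouch d hd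
end
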